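/- arXiv:1712.08325 — 6 statements merged into one kernel-verified Lean document; each statement's English description precedes it below -/
import Mathlib

section
/- Let Γ be a totally ordered abelian group, let A be a subgroup (or submonoid) of Γ with A nonpositive (every element ≤ 0) and A - A = ℤα for some positive α ∈ Γ. Then there exists an integer n such that for all integers k ≤ n, the element kα belongs to A. -/
/-!
Every element of `A` lies in `A - A = ℤα`, so writing `α = a - b` with `a, b ∈ A` gives
`a = -mα` and `b = -(m+1)α` for some `m ≥ 0`. Since consecutive integers `m, m+1` generate
every `N ≥ m²` as a nonnegative combination, `A` contains `-Nα` for all `N ≥ m²`.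
-/

/-- Write `N = d m + r` with `r < m ≤ d`; then `N = (d - r) m + r (m + 1)`. -/
theorem Nat.exists_eq_mul_add_mul_succ_of_mul_self_le {m N : ℕ} (hN : m * m ≤ N) :
    ∃ x y : ℕ, N = x * m + y * (m + 1) := by
  rcases m.eq_zero_or_pos with rfl | hm
  · exact ⟨0, N, by simp⟩
  have hrd : N % m ≤ N / m := (Nat.mod_lt N hm).le.trans ((Nat.le_div_iff_mul_le hm).mpr hN)
  obtain ⟨x, hx⟩ := Nat.exists_eq_add_of_le hrd
  refine ⟨x, N % m, ?_⟩
  have := Nat.div_add_mod' N m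
  rw [hx] at this
  linarith

theorem AddSubmonoid.nsmul_mem_of_mul_self_le {M : Type*} [AddMonoid M] (S : AddSubmonoid M)
    {γ : M} {m N : ℕ} (hm : m • γ ∈ S) (hm' : (m + 1) • γ ∈ S) (hN : m * m ≤ N) :
    N • γ ∈ S := by
  obtain ⟨x, y, rfl⟩ := Nat.exists_eq_mul_add_mul_succ_of_mul_self_le hN
  rw [add_nsmul, mul_nsmul', mul_nsmul']
  exact S.add_mem (S.nsmul_mem hm x) (S.nsmul_mem hm' y)

/-- If `A` is a nonpositive submonoid of a totally ordered abelian group `Γ` with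
`A - A = ℤα` for a positive `α`, then there is an integer `n` such that `k • α ∈ A`
for all integers `k ≤ n`. -/
theorem stmt0 {Γ : Type*} [AddCommGroup Γ] [LinearOrder Γ] [IsOrderedAddMonoid Γ] (A : AddSubmonoid Γ)
    (α : Γ) (hα : 0 < α)
    (hnonpos : ∀ a ∈ A, a ≤ 0)
    (hdiff : {γ : Γ | ∃ a ∈ A, ∃ b ∈ A, γ = a - b} = Set.range (fun n : ℤ => n • α)) :
    ∃ n : ℤ, ∀ k : ℤ, k ≤ n → k • α ∈ A := by
  have hsm : StrictMono fun n : ℤ => n • α := zsmul_left_strictMono hα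
  have hdiff_iff (γ : Γ) : (∃ a ∈ A, ∃ b ∈ A, γ = a - b) ↔ ∃ n : ℤ, n • α = γ :=
    Set.ext_iff.mp hdiff γ
  have hmul (c : Γ) (hc : c ∈ A) : ∃ p : ℤ, p • α = c :=
    (hdiff_iff c).mp ⟨c, hc, 0, A.zero_mem, (sub_zero c).symm⟩
  obtain ⟨a, ha, b, hb, hab⟩ := (hdiff_iff α).mpr ⟨1, one_zsmul α⟩
  obtain ⟨p, rfl⟩ := hmul a ha
  obtain ⟨q, rfl⟩ := hmul b hb
  obtain rfl : p = q + 1 := hsm.injective <| by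
    rw [add_zsmul, one_zsmul, add_comm]
    exact sub_eq_iff_eq_add.mp hab.symm
  have hq : q + 1 ≤ 0 := hsm.le_iff_le.mp (by simpa using hnonpos _ ha)
  obtain ⟨m, rfl⟩ : ∃ m : ℕ, q = -((m + 1 : ℕ) : ℤ) := ⟨(-(q + 1)).toNat, by omega⟩
  have hzsmul (j : ℕ) : (-(j : ℤ)) • α = j • (-α) := by simp
  refine ⟨-(m * m : ℕ), fun k hk => ?_⟩
  obtain ⟨N, rfl⟩ : ∃ N : ℕ, -(N : ℤ) = k := ⟨(-k).toNat, by omega⟩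
  rw [hzsmul]
  refine A.nsmul_mem_of_mul_self_le (m := m) ?_ ?_ (by omega)
  · rwa [← hzsmul, ← show -((m + 1 : ℕ) : ℤ) + 1 = -m by push_cast; ring]
  · rwa [← hzsmul]
end

section
/- Let v be a K-valuation on L, A a subring of L containing K, and V a K-vector space with A ⊆ V ⊆ L. If V = Au₁ + ⋯ + A u_d for some u₁,…,u_d ∈ V (i.e. V is generated by d elements as an A-module), then the quotient monoid v(V*)/v(A*) has cardinality at most d. -/
/-!
Nonzero elements of `V` whose values lie in pairwise distinct classes of `v(V*)/v(A*)` are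
linearly independent over `A`: in a relation `∑ aₖ xₖ = 0` the minimal value `v(aₖ) + v(xₖ)` is
attained twice, which puts two of the `v(xₖ)` in the same class. Since `V` lies in the `A`-span of
`d` elements, such a family has at most `d` members, so one of maximal size meets every class.
-/

open Function

namespace AddValuation

variable {Γ₀ : Type*} [LinearOrderedAddCommMonoidWithTop Γ₀]

theorem exists_ne_map_eq_of_sum_eq_zero {R ι : Type*} [Ring R] (w : AddValuation R Γ₀)
    {s : Finset ι} {f : ι → R} (hsum : ∑ i ∈ s, f i = 0) {i : ι} (hi : i ∈ s)
    (hfi : w (f i) ≠ ⊤) : ∃ j ∈ s, ∃ k ∈ s, j ≠ k ∧ w (f j) = w (f k) ∧ w (f j) ≠ ⊤ := by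
  classical
  obtain ⟨j, hj, hmin⟩ := s.exists_min_image (fun k => w (f k)) ⟨i, hi⟩
  have hfj : w (f j) ≠ ⊤ := ne_top_of_le_ne_top hfi (hmin i hi)
  by_contra! hne
  have hrest : w (f j) < w (∑ k ∈ s.erase j, f k) :=
    w.map_lt_sum hfj fun k hk => (hmin k (Finset.mem_of_mem_erase hk)).lt_of_ne
      fun h => hfj (hne j hj k (Finset.mem_of_mem_erase hk) (Finset.ne_of_mem_erase hk).symm h)
  have hsum' := w.map_add_eq_of_lt_left hrest
  rw [Finset.add_sum_erase s f hj, hsum, map_zero] at hsum'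
  exact hfj hsum'.symm

variable {L : Type*} [Field L]

/-- On `w(V*)`, the classes of this relation are the elements of `w(V*)/w(A*)`. -/
def EquivMod (w : AddValuation L Γ₀) (A : Subring L) (γ₁ γ₂ : Γ₀) : Prop :=
  ∃ a₁ ∈ A, ∃ a₂ ∈ A, a₁ ≠ 0 ∧ a₂ ≠ 0 ∧ γ₁ + w a₁ = γ₂ + w a₂

variable (w : AddValuation L Γ₀) (A : Subring L)

theorem equivMod_refl (γ : Γ₀) : w.EquivMod A γ γ :=
  ⟨1, A.one_mem, 1, A.one_mem, one_ne_zero, one_ne_zero, rfl⟩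

theorem equivMod_symm {γ₁ γ₂ : Γ₀} (h : w.EquivMod A γ₁ γ₂) : w.EquivMod A γ₂ γ₁ := by
  obtain ⟨a₁, ha₁, a₂, ha₂, ha₁0, ha₂0, h⟩ := h
  exact ⟨a₂, ha₂, a₁, ha₁, ha₂0, ha₁0, h.symm⟩

theorem linearIndependent_of_pairwise_not_equivMod [Nontrivial Γ₀] {ι : Type*} {x : ι → L}
    (hx : ∀ i, x i ≠ 0) (hpair : Pairwise fun i j => ¬ w.EquivMod A (w (x i)) (w (x j))) :
    LinearIndependent A x := by
  rw [linearIndependent_iff']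
  intro s g hg i hi
  by_contra hgi
  have hval : ∀ k, w (g k • x k) = w (g k) + w (x k) := fun k => w.map_mul _ _
  have hfin : ∀ k, g k ≠ 0 → w (g k • x k) ≠ ⊤ := fun k hk => by
    rw [Subring.smul_def, smul_eq_mul, w.ne_top_iff]
    exact mul_ne_zero (by simpa using hk) (hx k)
  obtain ⟨j, -, k, -, hjk, heq, htop⟩ := w.exists_ne_map_eq_of_sum_eq_zero hg hi (hfin i hgi)
  have hgj : (g j : L) ≠ 0 := fun h => htop (by rw [hval, h, w.map_zero, top_add])
  have hgk : (g k : L) ≠ 0 := fun h => htop (by rw [heq, hval, h, w.map_zero, top_add])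
  refine hpair hjk ⟨g j, (g j).2, g k, (g k).2, hgj, hgk, ?_⟩
  rwa [add_comm, add_comm (w (x k)), ← hval, ← hval]

theorem card_le_of_pairwise_not_equivMod [Nontrivial Γ₀] {d : ℕ} (u : Fin d → L) {t : Finset L}
    (hts : ↑t ⊆ (Submodule.span A (Set.range u) : Set L) \ {0})
    (htp : (t : Set L).Pairwise fun x y => ¬ w.EquivMod A (w x) (w y)) : t.card ≤ d := by
  classical
  have hind : LinearIndependent A ((↑) : t → L) :=
    w.linearIndependent_of_pairwise_not_equivMod A (fun x => (hts x.2).2)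
      fun x y hxy => htp x.2 y.2 (Subtype.coe_ne_coe.2 hxy)
  have hrange : Set.range ((↑) : t → L) ≤ Submodule.span A (Set.range u) := by
    rw [Subtype.range_coe]
    exact fun x hx => (hts hx).1
  simpa using (linearIndependent_le_span_aux' _ hind _ hrange).trans (Fintype.card_range_le u)

end AddValuation

theorem exists_finset_covering_of_pairwise_card_le {α : Type*} {r : α → α → Prop}
    (hrefl : ∀ x, r x x) (hsymm : ∀ x y, r x y → r y x) {s : Set α} {d : ℕ}
    (hbound : ∀ t : Finset α, ↑t ⊆ s → (t : Set α).Pairwise (fun x y => ¬ r x y) → t.card ≤ d) :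
    ∃ t : Finset α, ↑t ⊆ s ∧ t.card ≤ d ∧ ∀ x ∈ s, ∃ y ∈ t, r x y := by
  classical
  let good : Set (Finset α) := {t | ↑t ⊆ s ∧ (t : Set α).Pairwise fun x y => ¬ r x y}
  obtain ⟨t, ⟨hts, htp⟩, hmax⟩ : ∃ t ∈ good, ∀ t' ∈ good, t'.card ≤ t.card := by
    have hbdd : BddAbove (Finset.card '' good) := by
      refine ⟨d, ?_⟩
      rintro _ ⟨t, ht, rfl⟩
      exact hbound t ht.1 ht.2
    obtain ⟨_, ⟨t, ht, rfl⟩, hgreat⟩ :=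
      hbdd.exists_isGreatest_of_nonempty ⟨0, ∅, by simp [good], rfl⟩
    exact ⟨t, ht, fun t' ht' => hgreat ⟨t', ht', rfl⟩⟩
  refine ⟨t, hts, hbound t hts htp, fun x hx => ?_⟩
  by_contra! hxt
  have hxt' : x ∉ t := fun h => hxt x h (hrefl x)
  have hins : insert x t ∈ good := by
    refine ⟨by simpa [Set.insert_subset_iff] using ⟨hx, hts⟩, ?_⟩
    rw [Finset.coe_insert, Set.pairwise_insert]
    exact ⟨htp, fun y hy _ => ⟨hxt y hy, fun h => hxt y hy (hsymm y x h)⟩⟩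
  have := hmax _ hins
  rw [Finset.card_insert_of_notMem hxt'] at this
  omega

theorem Finset.exists_fin_range_eq {α : Type*} {t : Finset α} (ht : t.Nonempty) {d : ℕ}
    (hd : t.card ≤ d) : ∃ f : Fin d → α, Set.range f = t := by
  obtain ⟨e⟩ : Nonempty (t ↪ Fin d) := Function.Embedding.nonempty_of_card_le (by simpa using hd)
  have : Nonempty t := ht.to_subtype
  refine ⟨(↑) ∘ invFun e, ?_⟩
  rw [Set.range_comp, (invFun_surjective e.injective).range_eq, Set.image_univ,
    Subtype.range_coe_subtype, Finset.setOfPred_mem]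

theorem stmt2_general {K L Γ : Type*} [Field K] [Field L] [Algebra K L]
    [AddCommGroup Γ] [LinearOrder Γ] [IsOrderedAddMonoid Γ]
    (v : L → WithTop Γ)
    (hv0 : ∀ f : L, v f = ⊤ ↔ f = 0)
    (hvmul : ∀ f g : L, v (f * g) = v f + v g)
    (hvadd : ∀ f g : L, min (v f) (v g) ≤ v (f + g))
    (A : Subring L)
    (V : Submodule K L) (hAV : (A : Set L) ⊆ V)
    (d : ℕ) (u : Fin d → L)
    (hgen : ∀ x ∈ V, ∃ a : Fin d → L, (∀ i, a i ∈ A) ∧ x = ∑ i, a i * u i)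
    (rel : WithTop Γ → WithTop Γ → Prop)
    (hrel : ∀ γ₁ γ₂, rel γ₁ γ₂ ↔ ∃ a₁ ∈ A, ∃ a₂ ∈ A, a₁ ≠ 0 ∧ a₂ ≠ 0 ∧
      γ₁ + v a₁ = γ₂ + v a₂) :
    ∃ reps : Fin d → L, (∀ i, reps i ∈ V ∧ reps i ≠ 0) ∧
      ∀ x ∈ V, x ≠ 0 → ∃ i, rel (v x) (v (reps i)) := by
  have hv1 : v 1 = 0 :=
    WithTop.add_right_cancel (z := v 1) (fun h => one_ne_zero ((hv0 1).1 h))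
      (by rw [← hvmul, one_mul, zero_add])
  let w : AddValuation L (WithTop Γ) := .of v ((hv0 0).2 rfl) hv1 hvadd hvmul
  have hspan : (V : Set L) ⊆ Submodule.span A (Set.range u) := by
    intro x hx
    obtain ⟨a, ha, rfl⟩ := hgen x hx
    exact (Submodule.mem_span_range_iff_exists_fun A).2 ⟨fun i => ⟨a i, ha i⟩, rfl⟩
  have hbound : ∀ t : Finset L, ↑t ⊆ (V : Set L) \ {0} →
      (t : Set L).Pairwise (fun x y => ¬ w.EquivMod A (w x) (w y)) → t.card ≤ d :=
    fun t hts => w.card_le_of_pairwise_not_equivMod A u fun x hx => ⟨hspan (hts hx).1, (hts hx).2⟩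
  obtain ⟨t, hts, htd, hcover⟩ := exists_finset_covering_of_pairwise_card_le
    (fun x => w.equivMod_refl A (w x)) (fun _ _ => w.equivMod_symm A) hbound
  obtain ⟨y₁, hy₁, -⟩ := hcover 1 ⟨hAV A.one_mem, one_ne_zero⟩
  obtain ⟨reps, hreps⟩ := Finset.exists_fin_range_eq ⟨y₁, hy₁⟩ htd
  refine ⟨reps, fun i => hts (hreps ▸ Set.mem_range_self i), fun x hx hx0 => ?_⟩
  obtain ⟨y, hy, hxy⟩ := hcover x ⟨hx, hx0⟩
  obtain ⟨i, rfl⟩ : y ∈ Set.range reps := hreps ▸ hy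
  exact ⟨i, (hrel _ _).2 hxy⟩

/-- Lemma 2.2: if `V = Au₁ + ⋯ + Au_d`, then the quotient monoid `v(V*)/v(A*)` has
cardinality at most `d`: there are `d` nonzero elements of `V` such that the value of any
nonzero element of `V` is equivalent (mod `v(A*)`) to the value of one of them. -/
theorem stmt2 {K L Γ : Type*} [Field K] [Field L] [Algebra K L]
    [AddCommGroup Γ] [LinearOrder Γ] [IsOrderedAddMonoid Γ]
    (v : L → WithTop Γ)
    (hv0 : ∀ f : L, v f = ⊤ ↔ f = 0)
    (hvmul : ∀ f g : L, v (f * g) = v f + v g)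
    (hvadd : ∀ f g : L, min (v f) (v g) ≤ v (f + g))
    (hvres : ∀ f g : L, v f = v g → v f ≠ ⊤ →
      ∃! lam : K, v f < v (f + algebraMap K L lam * g))
    (A : Subring L) (hKA : Set.range (algebraMap K L) ⊆ A)
    (V : Submodule K L) (hAV : (A : Set L) ⊆ V)
    (d : ℕ) (hd : 0 < d) (u : Fin d → L) (hu : ∀ i, u i ∈ V)
    (hgen : ∀ x ∈ V, ∃ a : Fin d → L, (∀ i, a i ∈ A) ∧ x = ∑ i, a i * u i)
    (rel : WithTop Γ → WithTop Γ → Prop)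
    (hrel : ∀ γ₁ γ₂, rel γ₁ γ₂ ↔ ∃ a₁ ∈ A, ∃ a₂ ∈ A, a₁ ≠ 0 ∧ a₂ ≠ 0 ∧
      γ₁ + v a₁ = γ₂ + v a₂) :
    ∃ reps : Fin d → L, (∀ i, reps i ∈ V ∧ reps i ≠ 0) ∧
      ∀ x ∈ V, x ≠ 0 → ∃ i, rel (v x) (v (reps i)) :=
  stmt2_general v hv0 hvmul hvadd A V hAV d u hgen rel hrel
end

section
/- Let m, n be coprime positive integers, w ∈ K(x)[y] monic of y-degree m, and α, β nonzero non-commensurable elements of ℤ⊕ℤ with α indivisible. Let v be the map on K(x)[y] defined by v(f) = min over terms f_{i,j} y^j w^i of the w-expansion of { -v_∞(f_{i,j})·mα + jnα + iβ }. If for f, g ∈ K(x)[y]* the minima are attained at indices (i₁,j₁) and (i₂,j₂) respectively and v(f) = v(g), then i₁ = i₂, j₁ = j₂, and v_∞(f_{i₁,j₁}) = v_∞(g_{i₂,j₂}). -/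
open Polynomial

/-- The value of the term `a·y^j·w^i` (with `p = (i,j)`) under the map associated to
`(m, n, w, α, β)`: `-v_∞(a)·mα + jnα + iβ`, where `-v_∞(a) = intDegree a`. -/
noncomputable def termWeight (K : Type*) [Field K] (m n : ℕ) (α β : ℤ ×ₗ ℤ)
    (p : ℕ × ℕ) (a : RatFunc K) : ℤ ×ₗ ℤ :=
  (a.intDegree * (m : ℤ)) • α + ((p.2 : ℤ) * (n : ℤ)) • α + (p.1 : ℤ) • β


instance instNZSD : NoZeroSMulDivisors ℤ (ℤ ×ₗ ℤ) :=
  ⟨fun {a x} h => by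
    rcases eq_or_ne a 0 with ha | ha
    · exact Or.inl ha
    · refine Or.inr ?_
      have h1 : a • (ofLex x).1 = 0 := congrArg (fun z => (ofLex z).1) h
      have h2 : a • (ofLex x).2 = 0 := congrArg (fun z => (ofLex z).2) h
      have e1 := (smul_eq_zero.mp h1).resolve_left ha
      have e2 := (smul_eq_zero.mp h2).resolve_left ha
      have : ofLex x = 0 := Prod.ext e1 e2
      calc x = toLex (ofLex x) := rfl
        _ = toLex 0 := congrArg toLex this
        _ = 0 := rfl⟩

/-- Lemma 4.4: for the map `v` associated to `(m, n, w, α, β)` with `m, n` coprime and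
`α, β` non-commensurable, `α` indivisible: if the minima defining `v(f)` and `v(g)` are
attained at terms `f_{i₁,j₁} y^{j₁} w^{i₁}` and `g_{i₂,j₂} y^{j₂} w^{i₂}` and `v(f) = v(g)`,
then `i₁ = i₂`, `j₁ = j₂` and `v_∞(f_{i₁,j₁}) = v_∞(g_{i₂,j₂})`. -/
theorem stmt8 (K : Type*) [Field K] (m n : ℕ) (hm : 0 < m) (hn : 0 < n)
    (hmn : Nat.Coprime m n)
    (w : Polynomial (RatFunc K)) (hw : w.Monic) (hdeg : w.natDegree = m)
    (α β : ℤ ×ₗ ℤ) (hα : α ≠ 0) (hβ : β ≠ 0)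
    (hind : ∀ (k : ℤ) (γ : ℤ ×ₗ ℤ), 2 ≤ k → α ≠ k • γ)
    (hcom : ∀ a b : ℤ, a ≠ 0 → b ≠ 0 → a • α ≠ b • β)
    (f g : Polynomial (RatFunc K)) (hf : f ≠ 0) (hg : g ≠ 0)
    (cf cg : (ℕ × ℕ) →₀ RatFunc K)
    (hcf : ∀ p ∈ cf.support, p.2 < m)
    (hcg : ∀ p ∈ cg.support, p.2 < m)
    (hfexp : f = cf.sum (fun p a => Polynomial.C a * X ^ p.2 * w ^ p.1))
    (hgexp : g = cg.sum (fun p a => Polynomial.C a * X ^ p.2 * w ^ p.1))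
    (i₁ j₁ i₂ j₂ : ℕ)
    (hmem₁ : (i₁, j₁) ∈ cf.support)
    (hmem₂ : (i₂, j₂) ∈ cg.support)
    -- the minimum defining `v(f)` is attained at `(i₁, j₁)`, and that of `v(g)` at `(i₂, j₂)`
    (hmin₁ : ∀ p ∈ cf.support, termWeight K m n α β (i₁, j₁) (cf (i₁, j₁)) ≤
      termWeight K m n α β p (cf p))
    (hmin₂ : ∀ p ∈ cg.support, termWeight K m n α β (i₂, j₂) (cg (i₂, j₂)) ≤
      termWeight K m n α β p (cg p))
    -- `v(f) = v(g)`
    (heq : termWeight K m n α β (i₁, j₁) (cf (i₁, j₁)) =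
      termWeight K m n α β (i₂, j₂) (cg (i₂, j₂))) :
    i₁ = i₂ ∧ j₁ = j₂ ∧ (cf (i₁, j₁)).intDegree = (cg (i₂, j₂)).intDegree := by

  set d₁ := (cf (i₁, j₁)).intDegree with hd₁
  set d₂ := (cg (i₂, j₂)).intDegree with hd₂
  have key : (d₁ * m + j₁ * n - (d₂ * m + j₂ * n)) • α = ((i₂ : ℤ) - i₁) • β := by
    simp only [termWeight] at heq
    rw [sub_smul, add_smul, add_smul, sub_smul]
    linear_combination (norm := module) heq
  have hab : d₁ * m + j₁ * n - (d₂ * m + j₂ * n) = 0 ∧ ((i₂ : ℤ) - i₁) = 0 := by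
    by_cases ha : d₁ * m + j₁ * n - (d₂ * m + j₂ * n) = 0
    · refine ⟨ha, ?_⟩
      rw [ha, zero_smul] at key
      exact (smul_eq_zero.mp key.symm).resolve_right hβ
    · by_cases hb : ((i₂ : ℤ) - i₁) = 0
      · rw [hb, zero_smul] at key
        exact absurd ((smul_eq_zero.mp key).resolve_right hα) ha
      · exact absurd key (hcom _ _ ha hb)
  obtain ⟨ha, hb⟩ := hab
  have hi : i₁ = i₂ := by omega
  have hdvd : (m : ℤ) ∣ ((j₂ : ℤ) - j₁) := by
    have h1 : (m : ℤ) ∣ ((j₂ : ℤ) - j₁) * n := ⟨d₁ - d₂, by linear_combination -ha⟩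
    have hc : IsCoprime (m : ℤ) (n : ℤ) := Int.isCoprime_iff_gcd_eq_one.mpr hmn
    exact hc.dvd_of_dvd_mul_right h1
  have hj1 : j₁ < m := hcf _ hmem₁
  have hj2 : j₂ < m := hcg _ hmem₂
  have hm' : (1 : ℤ) ≤ m := by exact_mod_cast hm
  have hj1' : (j₁ : ℤ) < m := by exact_mod_cast hj1
  have hj2' : (j₂ : ℤ) < m := by exact_mod_cast hj2
  obtain ⟨k, hk⟩ := hdvd
  have hj' : (j₁ : ℤ) = j₂ := by
    rcases lt_trichotomy k 0 with h | h | h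
    · nlinarith
    · rw [h, mul_zero] at hk; linarith
    · nlinarith
  have hj : j₁ = j₂ := by exact_mod_cast hj'
  refine ⟨hi, hj, ?_⟩
  have hmul : d₁ * (m : ℤ) = d₂ * m := by rw [hj'] at ha; linarith
  exact mul_right_cancel₀ (by exact_mod_cast hm.ne') hmul
end

section
/- With v the map associated to (m, n, w, α, β) as in Definition 4 (α negative, α and β non-commensurable, m,n coprime), for all f, g ∈ K(x)[y]: (1) v(f+g) ≥ min(v(f), v(g)); (2) if v(f) ≠ v(g) then v(f+g) = min(v(f), v(g)); (3) if v(f) = v(g) ≠ ∞ then there exists a unique λ ∈ K with v(f + λg) > v(f). -/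
/-!
Admissible exponents `(i, j)`, `j < m`, carry pairwise distinct term weights: equal weights
give `a • α = b • β`, which non-commensurability forces to be trivial, and then
`m ∣ (j - j') n` with `m, n` coprime and `|j - j'| < m` gives `j = j'`. So the minimum defining
`v f` is attained at a single term, and there `v` only sees the valuation at infinity of the
coefficient. Then (1) is the ultrametric inequality termwise, (2) follows from (1) and
`v (-g) = v g`, and (3) is the fact that the residue field of `K(x)` at infinity is `K`: for
`a, b` of equal degree there is exactly one `λ ∈ K` lowering the degree of `a + λ b`.
-/

open Polynomial

lemma Nat.Coprime.eq_of_mul_add_mul_eq {m n j k : ℕ} (hmn : m.Coprime n) (hj : j < m)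
    (hk : k < m) {d e : ℤ} (h : d * m + j * n = e * m + k * n) : j = k := by
  have hdvd : (m : ℤ) ∣ ((k : ℤ) - j) * n := ⟨d - e, by linear_combination -h⟩
  have := Int.eq_zero_of_abs_lt_dvd
    ((Nat.isCoprime_iff_coprime.mpr hmn).dvd_of_dvd_mul_right hdvd) (by rw [abs_lt]; omega)
  omega

lemma sum_C_mul_X_pow_mul_pow_eq_linearCombination {R : Type*} [CommSemiring R] (w : R[X])
    (c : (ℕ × ℕ) →₀ R) :
    c.sum (fun p a => C a * X ^ p.2 * w ^ p.1) =
      Finsupp.linearCombination R (fun p : ℕ × ℕ => X ^ p.2 * w ^ p.1) c := by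
  simp [Finsupp.linearCombination_apply, Polynomial.smul_eq_C_mul, mul_assoc]

lemma add_eq_min_of_ne {G Γ : Type*} [AddCommGroup G] [LinearOrder Γ] {v : G → Γ}
    (hadd : ∀ f g, min (v f) (v g) ≤ v (f + g)) (hneg : ∀ g, v (-g) = v g) {f g : G}
    (h : v f ≠ v g) : v (f + g) = min (v f) (v g) := by
  wlog hlt : v f < v g generalizing f g
  · rw [add_comm, min_comm]
    exact this h.symm (h.lt_or_gt.resolve_left hlt)
  have hf : min (v (f + g)) (v g) ≤ v f := by simpa [hneg] using hadd (f + g) (-g)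
  rw [min_eq_left hlt.le]
  refine le_antisymm (not_lt.mp fun hgt => (lt_min hgt hlt).not_ge hf) ?_
  simpa [min_eq_left hlt.le] using hadd f g

lemma eq_of_termWeight_eq {K : Type*} [Field K] {m n : ℕ} (hmn : m.Coprime n)
    {α β : ℤ ×ₗ ℤ} (hα : α ≠ 0) (hβ : β ≠ 0)
    (hcom : ∀ a b : ℤ, a ≠ 0 → b ≠ 0 → a • α ≠ b • β)
    {p q : ℕ × ℕ} (hp : p.2 < m) (hq : q.2 < m) {a b : RatFunc K}
    (h : termWeight K m n α β p a = termWeight K m n α β q b) : p = q := by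
  set A : ℤ := (a.intDegree * m + p.2 * n) - (b.intDegree * m + q.2 * n) with hA_def
  set B : ℤ := q.1 - p.1
  have hAB : A • α = B • β := by
    have : A • α - B • β = termWeight K m n α β p a - termWeight K m n α β q b := by
      simp only [termWeight, A, B, sub_smul, add_smul]; abel
    rwa [h, sub_self, sub_eq_zero] at this
  have hB : B = 0 := by
    by_contra hB
    have hA : A ≠ 0 := by
      rintro hA
      rw [hA, zero_smul, eq_comm, smul_eq_zero] at hAB
      tauto
    exact hcom A B hA hB hAB
  rw [hB, zero_smul, smul_eq_zero, hA_def, sub_eq_zero] at hAB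
  have h2 := hmn.eq_of_mul_add_mul_eq hp hq (hAB.resolve_right hα)
  exact Prod.ext (by omega) h2

open RatFunc (inftyValuation)

section InftyValuation

variable {K : Type*} [Field K] [DecidableEq (RatFunc K)]

lemma RatFunc.inftyValuation_C_mul_le (l : K) (b : RatFunc K) :
    inftyValuation K (RatFunc.C l * b) ≤ inftyValuation K b := by
  rcases eq_or_ne l 0 with rfl | hl
  · simp
  · simp [RatFunc.inftyValuation.C K hl]

lemma RatFunc.inftyValuation_algebraMap_lt_iff {P D : K[X]} (hD : D ≠ 0) :
    inftyValuation K (algebraMap K[X] (RatFunc K) P) <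
      inftyValuation K (algebraMap K[X] (RatFunc K) D) ↔ P.degree < D.degree := by
  rcases eq_or_ne P 0 with rfl | hP
  · simp [Valuation.pos_iff, hD, Polynomial.degree_eq_natDegree hD]
  · simp [RatFunc.inftyValuation_apply, hP, hD, Polynomial.degree_eq_natDegree hP,
      Polynomial.degree_eq_natDegree hD]

lemma RatFunc.exists_inftyValuation_add_C_lt_one {q : RatFunc K}
    (hq : inftyValuation K q = 1) : ∃ l : K, inftyValuation K (q + RatFunc.C l) < 1 := by
  rw [← RatFunc.num_div_denom q] at hq ⊢
  set N := q.num
  set D := q.denom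
  have hD : D ≠ 0 := q.denom_ne_zero
  have hD' : algebraMap K[X] (RatFunc K) D ≠ 0 := RatFunc.algebraMap_ne_zero hD
  have hD'' : inftyValuation K (algebraMap K[X] (RatFunc K) D) ≠ 0 := by simpa using hD'
  have hN : N ≠ 0 := by rintro hN; simp [hN] at hq
  have hND : N.degree = D.degree := by
    rw [map_div₀, div_eq_one_iff_eq hD'', RatFunc.inftyValuation_apply,
      RatFunc.inftyValuation_apply, RatFunc.inftyValuation.polynomial K hN,
      RatFunc.inftyValuation.polynomial K hD, WithZero.exp_inj, Nat.cast_inj] at hq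
    rw [Polynomial.degree_eq_natDegree hN, Polynomial.degree_eq_natDegree hD, hq]
  refine ⟨-(N.leadingCoeff / D.leadingCoeff), ?_⟩
  have hsum : algebraMap K[X] (RatFunc K) N / algebraMap K[X] (RatFunc K) D +
      RatFunc.C (-(N.leadingCoeff / D.leadingCoeff)) =
      algebraMap K[X] (RatFunc K) (N - Polynomial.C (N.leadingCoeff / D.leadingCoeff) * D) /
        algebraMap K[X] (RatFunc K) D := by
    rw [map_sub, map_mul, sub_div, mul_div_cancel_right₀ _ hD', RatFunc.algebraMap_C, map_neg,
      sub_eq_add_neg]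
  rw [hsum, map_div₀, div_lt_one₀ (pos_iff_ne_zero.mpr hD''),
    RatFunc.inftyValuation_algebraMap_lt_iff hD, ← hND]
  have hlc : D.leadingCoeff ≠ 0 := Polynomial.leadingCoeff_ne_zero.mpr hD
  apply Polynomial.degree_sub_lt_left _ hN
  · simp [hlc]
  · rw [Polynomial.degree_C_mul (div_ne_zero (Polynomial.leadingCoeff_ne_zero.mpr hN) hlc), hND]

lemma RatFunc.existsUnique_inftyValuation_add_C_mul_lt {a b : RatFunc K} (hb : b ≠ 0)
    (hab : inftyValuation K a = inftyValuation K b) :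
    ∃! l : K, inftyValuation K (a + RatFunc.C l * b) < inftyValuation K a := by
  have hvb : inftyValuation K b ≠ 0 := by simpa using hb
  obtain ⟨l, hl⟩ := RatFunc.exists_inftyValuation_add_C_lt_one
    (by rw [map_div₀, hab, div_self hvb] : inftyValuation K (a / b) = 1)
  have hlt : inftyValuation K (a + RatFunc.C l * b) < inftyValuation K a := by
    rw [show a + RatFunc.C l * b = (a / b + RatFunc.C l) * b by field_simp, map_mul, hab]
    exact mul_lt_of_lt_one_left (pos_iff_ne_zero.mpr hvb) hl
  refine ⟨l, hlt, fun l' hl' => ?_⟩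
  by_contra hne
  have hdiff : RatFunc.C (l' - l) * b = (a + RatFunc.C l' * b) - (a + RatFunc.C l * b) := by
    rw [map_sub]; ring
  have hle := (inftyValuation K).map_sub (a + RatFunc.C l' * b) (a + RatFunc.C l * b)
  rw [← hdiff, map_mul, RatFunc.inftyValuation.C K (sub_ne_zero.mpr hne), one_mul, ← hab] at hle
  exact (hle.trans_lt (max_lt hl' hlt)).false

end InftyValuation

section TermValue

variable {K : Type*} [Field K] [DecidableEq (RatFunc K)] {m n : ℕ} {α β : ℤ ×ₗ ℤ}
  {p : ℕ × ℕ} {a b : RatFunc K}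

-- A vanishing term has value `⊤`, not the junk weight coming from `intDegree 0 = 0`.
noncomputable def termValue (K : Type*) [Field K] [DecidableEq (RatFunc K)] (m n : ℕ)
    (α β : ℤ ×ₗ ℤ) (p : ℕ × ℕ) (a : RatFunc K) : WithTop (ℤ ×ₗ ℤ) :=
  if a = 0 then ⊤ else termWeight K m n α β p a

lemma termValue_of_ne_zero (ha : a ≠ 0) :
    termValue K m n α β p a = termWeight K m n α β p a := if_neg ha

@[simp]
lemma termValue_zero : termValue K m n α β p 0 = ⊤ := if_pos rfl

lemma termValue_le_termValue_iff (hm : 0 < m) (hα : α < 0) :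
    termValue K m n α β p a ≤ termValue K m n α β p b ↔
      inftyValuation K b ≤ inftyValuation K a := by
  rcases eq_or_ne a 0 with rfl | ha
  · simp [termValue]
  rcases eq_or_ne b 0 with rfl | hb
  · simp
  rw [termValue_of_ne_zero ha, termValue_of_ne_zero hb, WithTop.coe_le_coe,
    RatFunc.inftyValuation_apply, RatFunc.inftyValuation_apply,
    RatFunc.inftyValuation_of_nonzero K ha, RatFunc.inftyValuation_of_nonzero K hb,
    WithZero.exp_le_exp, termWeight, termWeight, add_le_add_iff_right, add_le_add_iff_right,
    (zsmul_left_strictAnti hα).le_iff_ge]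
  exact mul_le_mul_iff_left₀ (by exact_mod_cast hm)

lemma termValue_lt_termValue_iff (hm : 0 < m) (hα : α < 0) :
    termValue K m n α β p a < termValue K m n α β p b ↔
      inftyValuation K b < inftyValuation K a := by
  simp only [← not_le, termValue_le_termValue_iff hm hα]

lemma termValue_eq_termValue_iff (hm : 0 < m) (hα : α < 0) :
    termValue K m n α β p a = termValue K m n α β p b ↔
      inftyValuation K a = inftyValuation K b := by
  simp only [le_antisymm_iff, termValue_le_termValue_iff hm hα, and_comm]

lemma min_termValue_le_termValue_add (hm : 0 < m) (hα : α < 0) :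
    min (termValue K m n α β p a) (termValue K m n α β p b) ≤ termValue K m n α β p (a + b) := by
  simpa only [min_le_iff, termValue_le_termValue_iff hm hα, ← le_max_iff] using
    (inftyValuation K).map_add a b

lemma termValue_le_termValue_C_mul (hm : 0 < m) (hα : α < 0) (l : K) :
    termValue K m n α β p b ≤ termValue K m n α β p (RatFunc.C l * b) :=
  (termValue_le_termValue_iff hm hα).mpr (RatFunc.inftyValuation_C_mul_le l b)

end TermValue

section ExpansionValue

noncomputable def expansionValue (K : Type*) [Field K] (m n : ℕ) (α β : ℤ ×ₗ ℤ)
    (c : (ℕ × ℕ) →₀ RatFunc K) : WithTop (ℤ ×ₗ ℤ) :=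
  c.support.inf fun p => termWeight K m n α β p (c p)

variable {K : Type*} [Field K] {m n : ℕ} {α β : ℤ ×ₗ ℤ} {c d : (ℕ × ℕ) →₀ RatFunc K}

@[simp]
lemma expansionValue_neg : expansionValue K m n α β (-c) = expansionValue K m n α β c := by
  simp [expansionValue, termWeight]

variable [DecidableEq (RatFunc K)]

lemma expansionValue_le_termValue (p : ℕ × ℕ) :
    expansionValue K m n α β c ≤ termValue K m n α β p (c p) := by
  by_cases hp : c p = 0
  · simp [hp]
  · rw [termValue_of_ne_zero hp]
    exact Finset.inf_le (Finsupp.mem_support_iff.mpr hp)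

lemma expansionValue_eq_inf_termValue {s : Finset (ℕ × ℕ)} (hs : c.support ⊆ s) :
    expansionValue K m n α β c = s.inf fun p => termValue K m n α β p (c p) := by
  refine le_antisymm (Finset.le_inf fun p _ => expansionValue_le_termValue p) ?_
  refine (Finset.inf_mono hs).trans_eq (Finset.inf_congr rfl fun p hp => ?_)
  exact termValue_of_ne_zero (Finsupp.mem_support_iff.mp hp)

lemma exists_termValue_eq_expansionValue (htop : expansionValue K m n α β c ≠ ⊤) :
    ∃ p ∈ c.support, termValue K m n α β p (c p) = expansionValue K m n α β c := by
  rw [expansionValue_eq_inf_termValue subset_rfl] at htop ⊢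
  obtain ⟨p, hp, hinf⟩ := Finset.exists_mem_eq_inf c.support
    (Finset.nonempty_iff_ne_empty.mpr (by rintro h; simp [h] at htop))
    fun p => termValue K m n α β p (c p)
  exact ⟨p, hp, hinf.symm⟩

lemma min_expansionValue_le_add (hm : 0 < m) (hα : α < 0) :
    min (expansionValue K m n α β c) (expansionValue K m n α β d) ≤
      expansionValue K m n α β (c + d) := by
  classical
  rw [expansionValue_eq_inf_termValue (Finset.subset_union_left (s₂ := d.support)),
    expansionValue_eq_inf_termValue (Finset.subset_union_right (s₁ := c.support)),
    expansionValue_eq_inf_termValue Finsupp.support_add, ← Finset.inf_inf]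
  exact Finset.inf_mono_fun fun p _ => min_termValue_le_termValue_add hm hα

lemma eq_of_termValue_eq_termValue (hmn : m.Coprime n) (hα : α ≠ 0) (hβ : β ≠ 0)
    (hcom : ∀ a b : ℤ, a ≠ 0 → b ≠ 0 → a • α ≠ b • β)
    (hc : ∀ p ∈ c.support, p.2 < m) (hd : ∀ p ∈ d.support, p.2 < m) {p q : ℕ × ℕ}
    (h : termValue K m n α β p (c p) = termValue K m n α β q (d q))
    (htop : termValue K m n α β p (c p) ≠ ⊤) : p = q := by
  have hp : c p ≠ 0 := by rintro hp; simp [hp] at htop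
  have hq : d q ≠ 0 := by rintro hq; simp [h, hq] at htop
  rw [termValue_of_ne_zero hp, termValue_of_ne_zero hq, WithTop.coe_inj] at h
  exact eq_of_termWeight_eq hmn hα hβ hcom (hc p (Finsupp.mem_support_iff.mpr hp))
    (hd q (Finsupp.mem_support_iff.mpr hq)) h

lemma expansionValue_lt_termValue (hmn : m.Coprime n) (hα : α ≠ 0) (hβ : β ≠ 0)
    (hcom : ∀ a b : ℤ, a ≠ 0 → b ≠ 0 → a • α ≠ b • β)
    (hc : ∀ p ∈ c.support, p.2 < m) {p₀ p : ℕ × ℕ}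
    (hp₀ : termValue K m n α β p₀ (c p₀) = expansionValue K m n α β c)
    (htop : expansionValue K m n α β c ≠ ⊤) (hne : p ≠ p₀) :
    expansionValue K m n α β c < termValue K m n α β p (c p) :=
  (expansionValue_le_termValue p).lt_of_ne fun h =>
    hne (eq_of_termValue_eq_termValue hmn hα hβ hcom hc hc (h.symm.trans hp₀.symm) (h ▸ htop))

theorem existsUnique_lt_expansionValue_add_C_smul (hm : 0 < m) (hmn : m.Coprime n)
    (hα : α < 0) (hβ : β ≠ 0) (hcom : ∀ a b : ℤ, a ≠ 0 → b ≠ 0 → a • α ≠ b • β)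
    (hc : ∀ p ∈ c.support, p.2 < m) (hd : ∀ p ∈ d.support, p.2 < m)
    (hcd : expansionValue K m n α β c = expansionValue K m n α β d)
    (htop : expansionValue K m n α β c ≠ ⊤) :
    ∃! l : K, expansionValue K m n α β c < expansionValue K m n α β (c + RatFunc.C l • d) := by
  classical
  obtain ⟨p₀, hp₀c, hp₀⟩ := exists_termValue_eq_expansionValue htop
  obtain ⟨q₀, hq₀d, hq₀⟩ := exists_termValue_eq_expansionValue (hcd ▸ htop)
  obtain rfl : q₀ = p₀ := eq_of_termValue_eq_termValue hmn hα.ne hβ hcom hd hc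
    (hq₀.trans (hcd.symm.trans hp₀.symm)) (hq₀ ▸ hcd ▸ htop)
  have key : ∀ l : K,
      expansionValue K m n α β c < expansionValue K m n α β (c + RatFunc.C l • d) ↔
        inftyValuation K (c q₀ + RatFunc.C l * d q₀) < inftyValuation K (c q₀) := by
    intro l
    have hs : (c + RatFunc.C l • d).support ⊆ c.support ∪ d.support :=
      Finsupp.support_add.trans (Finset.union_subset_union subset_rfl Finsupp.support_smul)
    rw [expansionValue_eq_inf_termValue hs, Finset.lt_inf_iff htop.lt_top,
      ← termValue_lt_termValue_iff hm hα (n := n) (β := β) (p := q₀), hp₀]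
    simp only [Finsupp.coe_add, Finsupp.coe_smul, Pi.add_apply, Pi.smul_apply, smul_eq_mul]
    refine ⟨fun h => h q₀ (Finset.mem_union_left _ hp₀c), fun h p _ => ?_⟩
    rcases eq_or_ne p q₀ with rfl | hne
    · exact h
    calc expansionValue K m n α β c
        < min (termValue K m n α β p (c p)) (termValue K m n α β p (d p)) :=
          lt_min (expansionValue_lt_termValue hmn hα.ne hβ hcom hc hp₀ htop hne)
            (hcd ▸ expansionValue_lt_termValue hmn hα.ne hβ hcom hd hq₀ (hcd ▸ htop) hne)
      _ ≤ min (termValue K m n α β p (c p)) (termValue K m n α β p (RatFunc.C l * d p)) :=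
          min_le_min_left _ (termValue_le_termValue_C_mul hm hα l)
      _ ≤ termValue K m n α β p (c p + RatFunc.C l * d p) :=
          min_termValue_le_termValue_add hm hα
  have hd₀ : d q₀ ≠ 0 := Finsupp.mem_support_iff.mp hq₀d
  refine (existsUnique_congr key).mpr (RatFunc.existsUnique_inftyValuation_add_C_mul_lt hd₀ ?_)
  exact (termValue_eq_termValue_iff hm hα).mp (hp₀.trans (hcd.trans hq₀.symm))

end ExpansionValue

theorem stmt9_general (K : Type*) [Field K] (m n : ℕ) (hm : 0 < m)
    (hmn : Nat.Coprime m n)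
    (w : Polynomial (RatFunc K))
    (α β : ℤ ×ₗ ℤ) (hαneg : α < 0) (hβ : β ≠ 0)
    (hcom : ∀ a b : ℤ, a ≠ 0 → b ≠ 0 → a • α ≠ b • β)
    (v : Polynomial (RatFunc K) → WithTop (ℤ ×ₗ ℤ))
    -- every `f` has a `w`-expansion
    (hexp : ∀ f : Polynomial (RatFunc K), ∃ c : (ℕ × ℕ) →₀ RatFunc K,
      (∀ p ∈ c.support, p.2 < m) ∧
      f = c.sum (fun p a => Polynomial.C a * X ^ p.2 * w ^ p.1))
    -- `v(f)` is the minimum of the term values of the `w`-expansion of `f`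
    (hv : ∀ (f : Polynomial (RatFunc K)) (c : (ℕ × ℕ) →₀ RatFunc K),
      (∀ p ∈ c.support, p.2 < m) →
      f = c.sum (fun p a => Polynomial.C a * X ^ p.2 * w ^ p.1) →
      v f = c.support.inf (fun p => ((termWeight K m n α β p (c p) : WithTop (ℤ ×ₗ ℤ))))) :
    (∀ f g : Polynomial (RatFunc K), min (v f) (v g) ≤ v (f + g)) ∧
    (∀ f g : Polynomial (RatFunc K), v f ≠ v g → v (f + g) = min (v f) (v g)) ∧
    (∀ f g : Polynomial (RatFunc K), v f = v g → v f ≠ ⊤ →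
      ∃! lam : K, v f < v (f + Polynomial.C (RatFunc.C lam) * g)) := by
  classical
  set S := Finsupp.supported (RatFunc K) (RatFunc K) {p : ℕ × ℕ | p.2 < m}
  set E := Finsupp.linearCombination (RatFunc K) fun p : ℕ × ℕ => (X ^ p.2 * w ^ p.1 : _[X])
  have hvE : ∀ c ∈ S, v (E c) = expansionValue K m n α β c := fun c hc =>
    hv _ c ((Finsupp.mem_supported _ c).mp hc)
      (sum_C_mul_X_pow_mul_pow_eq_linearCombination w c).symm
  have hsurj (f : (RatFunc K)[X]) : ∃ c ∈ S, E c = f := by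
    obtain ⟨c, hc, rfl⟩ := hexp f
    exact ⟨c, (Finsupp.mem_supported _ c).mpr hc,
      (sum_C_mul_X_pow_mul_pow_eq_linearCombination w c).symm⟩
  have hadd (f g : (RatFunc K)[X]) : min (v f) (v g) ≤ v (f + g) := by
    obtain ⟨c, hc, rfl⟩ := hsurj f
    obtain ⟨d, hd, rfl⟩ := hsurj g
    rw [← map_add, hvE c hc, hvE d hd, hvE _ (S.add_mem hc hd)]
    exact min_expansionValue_le_add hm hαneg
  have hneg (g : (RatFunc K)[X]) : v (-g) = v g := by
    obtain ⟨d, hd, rfl⟩ := hsurj g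
    rw [← map_neg, hvE d hd, hvE _ (S.neg_mem hd), expansionValue_neg]
  refine ⟨hadd, fun f g => add_eq_min_of_ne hadd hneg, fun f g hfg htop => ?_⟩
  obtain ⟨c, hc, rfl⟩ := hsurj f
  obtain ⟨d, hd, rfl⟩ := hsurj g
  rw [hvE c hc] at hfg htop
  rw [hvE d hd] at hfg
  refine (existsUnique_congr fun l => ?_).mpr (existsUnique_lt_expansionValue_add_C_smul hm hmn
    hαneg hβ hcom ((Finsupp.mem_supported _ c).mp hc) ((Finsupp.mem_supported _ d).mp hd) hfg htop)
  rw [← Polynomial.smul_eq_C_mul, ← map_smul, ← map_add, hvE c hc,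
    hvE _ (S.add_mem hc (S.smul_mem _ hd))]

/-- Lemma 4.6: the map `v` associated to `(m, n, w, α, β)` (with `α` negative, `α, β`
non-commensurable, `m, n` coprime) satisfies, for all `f, g`:
(1) `v(f+g) ≥ min(v f, v g)`; (2) if `v f ≠ v g` then `v(f+g) = min(v f, v g)`;
(3) if `v f = v g ≠ ∞` then there is a unique `λ ∈ K` with `v(f + λg) > v f`. -/
theorem stmt9 (K : Type*) [Field K] (m n : ℕ) (hm : 0 < m) (hn : 0 < n)
    (hmn : Nat.Coprime m n)
    (w : Polynomial (RatFunc K)) (hw : w.Monic) (hdeg : w.natDegree = m)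
    (α β : ℤ ×ₗ ℤ) (hαneg : α < 0) (hβ : β ≠ 0)
    (hind : ∀ (k : ℤ) (γ : ℤ ×ₗ ℤ), 2 ≤ k → α ≠ k • γ)
    (hcom : ∀ a b : ℤ, a ≠ 0 → b ≠ 0 → a • α ≠ b • β)
    (v : Polynomial (RatFunc K) → WithTop (ℤ ×ₗ ℤ))
    -- every `f` has a `w`-expansion
    (hexp : ∀ f : Polynomial (RatFunc K), ∃ c : (ℕ × ℕ) →₀ RatFunc K,
      (∀ p ∈ c.support, p.2 < m) ∧
      f = c.sum (fun p a => Polynomial.C a * X ^ p.2 * w ^ p.1))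
    -- `v(f)` is the minimum of the term values of the `w`-expansion of `f`
    (hv : ∀ (f : Polynomial (RatFunc K)) (c : (ℕ × ℕ) →₀ RatFunc K),
      (∀ p ∈ c.support, p.2 < m) →
      f = c.sum (fun p a => Polynomial.C a * X ^ p.2 * w ^ p.1) →
      v f = c.support.inf (fun p => ((termWeight K m n α β p (c p) : WithTop (ℤ ×ₗ ℤ))))) :
    (∀ f g : Polynomial (RatFunc K), min (v f) (v g) ≤ v (f + g)) ∧
    (∀ f g : Polynomial (RatFunc K), v f ≠ v g → v (f + g) = min (v f) (v g)) ∧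
    (∀ f g : Polynomial (RatFunc K), v f = v g → v f ≠ ⊤ →
      ∃! lam : K, v f < v (f + Polynomial.C (RatFunc.C lam) * g)) :=
  stmt9_general K m n hm hmn w α β hαneg hβ hcom v hexp hv
end

section
/- Under the hypotheses of Proposition 4.8 (β > mnα, v(w_k) > (m-k)nα for 1 ≤ k ≤ m-1, v(w_0) = mnα), the identity v(y^j w^i) = jnα + iβ holds for all i ≥ 0 and 0 ≤ j ≤ 2m-1. -/
open Polynomial
open scoped Classical

/-- The restriction of the map associated to `(m, n, w, α, β)` to `K(x)`:
`v(h) = -v_∞(h)·mα`, with `v(0) = ∞`. -/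
noncomputable def vBase (K : Type*) [Field K] (m : ℕ) (α : ℤ ×ₗ ℤ) (h : RatFunc K) :
    WithTop (ℤ ×ₗ ℤ) :=
  if h = 0 then ⊤ else ((h.intDegree * (m : ℤ)) • α : ℤ ×ₗ ℤ)

/-- An element of `K(x)[y]` lies in `K[x,y]` iff all its coefficients are polynomials. -/
def polyCoeffs (K : Type*) [Field K] (f : Polynomial (RatFunc K)) : Prop :=
  ∀ i : ℕ, ∃ p : Polynomial K, f.coeff i = algebraMap (Polynomial K) (RatFunc K) p

/-!
Write `X ^ j * w ^ i` as `∑ c (p, q) • X ^ q * w ^ p` with `q < m`, so that `v` is the termwise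
minimum of `-v_∞(c (p, q)) mα + q nα + p β`. For `j < m` the monomial is itself a basis
element. For `j = m + r`, substituting `X ^ m = w - ∑_{k<m} w_k X ^ k` gives
`X ^ j w ^ i = X ^ r w ^ (i+1) - ∑_{k<m} w_k X ^ (r+k) w ^ i`, and by induction on `j` the
`k`-th summand has value `v(w_k) + (r+k)nα + iβ`. By (iii) the summand `k = 0` has value exactly
`jnα + iβ`, while by (ii) the others and by (i) the term `X ^ r w ^ (i+1)` are strictly larger,
so this minimum is attained once and cannot cancel.
-/

theorem natCast_mul_natCast_zsmul {G : Type*} [AddGroup G] (j n : ℕ) (x : G) :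
    ((j : ℤ) * n) • x = j • n • x := by
  rw [mul_zsmul, natCast_zsmul, natCast_zsmul]

theorem WithTop.coe_zsmul {G : Type*} [AddCommGroup G] [LinearOrder G] [IsOrderedAddMonoid G]
    (k : ℤ) (x : G) : ((k • x : G) : WithTop G) = k • (x : WithTop G) := by
  cases k with
  | ofNat k => rw [Int.ofNat_eq_natCast, natCast_zsmul, natCast_zsmul, WithTop.coe_nsmul]
  | negSucc k => rw [negSucc_zsmul, negSucc_zsmul, WithTop.LinearOrderedAddCommGroup.coe_neg,
    WithTop.coe_nsmul]

namespace Finsupp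

variable {ι R Γ₀ : Type*} [Ring R] [LinearOrderedAddCommMonoidWithTop Γ₀]

/-- The value of `∑ c p • e p` under a valuation extending `ν` with `e p ↦ wt p`, computed as if
no two terms could cancel. -/
noncomputable def gaussVal (ν : AddValuation R Γ₀) (wt : ι → Γ₀) (c : ι →₀ R) : Γ₀ :=
  c.support.inf fun p => ν (c p) + wt p

variable {ν : AddValuation R Γ₀} {wt : ι → Γ₀}

theorem le_gaussVal_iff {t : Γ₀} {c : ι →₀ R} :
    t ≤ gaussVal ν wt c ↔ ∀ p, t ≤ ν (c p) + wt p := by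
  simp only [gaussVal, Finset.le_inf_iff, mem_support_iff]
  refine ⟨fun h p => ?_, fun h p _ => h p⟩
  by_cases hp : c p = 0
  · simp [hp]
  · exact h p hp

theorem gaussVal_le (c : ι →₀ R) (p : ι) : gaussVal ν wt c ≤ ν (c p) + wt p :=
  le_gaussVal_iff.1 le_rfl p

@[simp]
theorem gaussVal_zero : gaussVal ν wt 0 = ⊤ := by
  simp [gaussVal]

theorem gaussVal_single (p : ι) (a : R) : gaussVal ν wt (single p a) = ν a + wt p := by
  by_cases ha : a = 0
  · simp [ha]
  · simp [gaussVal, support_single, ha]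

theorem min_le_gaussVal_add (c d : ι →₀ R) :
    min (gaussVal ν wt c) (gaussVal ν wt d) ≤ gaussVal ν wt (c + d) :=
  le_gaussVal_iff.2 fun p => (min_le_min (gaussVal_le c p) (gaussVal_le d p)).trans <| by
    rw [min_add_add_right, add_apply]
    exact add_le_add_left (ν.map_add _ _) _

theorem gaussVal_smul (a : R) (c : ι →₀ R) :
    gaussVal ν wt (a • c) = ν a + gaussVal ν wt c := by
  refine le_antisymm ?_ (le_gaussVal_iff.2 fun p => ?_)
  · rcases c.support.eq_empty_or_nonempty with hc | hc
    · simp [support_eq_empty.1 hc]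
    obtain ⟨p, -, hp⟩ := c.support.exists_mem_eq_inf hc fun p => ν (c p) + wt p
    calc gaussVal ν wt (a • c) ≤ ν ((a • c) p) + wt p := gaussVal_le _ p
      _ = ν a + gaussVal ν wt c := by
        rw [smul_apply, smul_eq_mul, AddValuation.map_mul, add_assoc, gaussVal, hp]
  · rw [smul_apply, smul_eq_mul, AddValuation.map_mul, add_assoc]
    exact add_le_add_right (gaussVal_le c p) _

theorem gaussVal_neg (c : ι →₀ R) : gaussVal ν wt (-c) = gaussVal ν wt c := by
  rw [← neg_one_smul R c, gaussVal_smul, AddValuation.map_neg, AddValuation.map_one, zero_add]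

theorem gaussVal_add_eq_of_lt {c d : ι →₀ R} (h : gaussVal ν wt c < gaussVal ν wt d) :
    gaussVal ν wt (c + d) = gaussVal ν wt c := by
  refine le_antisymm (not_lt.1 fun hlt => ?_) ((le_min le_rfl h.le).trans (min_le_gaussVal_add c d))
  have := min_le_gaussVal_add (ν := ν) (wt := wt) (c + d) (-d)
  rw [add_neg_cancel_right, gaussVal_neg] at this
  exact (lt_min hlt h).not_ge this

theorem lt_gaussVal_sum {κ : Type*} (s : Finset κ) (g : κ → ι →₀ R) {t : Γ₀} (ht : t < ⊤)
    (h : ∀ k ∈ s, t < gaussVal ν wt (g k)) : t < gaussVal ν wt (∑ k ∈ s, g k) := by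
  classical
  induction s using Finset.induction_on with
  | empty => simpa using ht
  | insert k s hk ih =>
    rw [Finset.sum_insert hk]
    refine (lt_min (h k (Finset.mem_insert_self k s)) (ih fun l hl => ?_)).trans_le
      (min_le_gaussVal_add _ _)
    exact h l (Finset.mem_insert_of_mem hl)

end Finsupp

section WExpansion

open Finsupp

variable {R G : Type*} [CommRing R] [AddCommGroup G] [LinearOrder G] [IsOrderedAddMonoid G]
  {ν : AddValuation R (WithTop G)} {w : R[X]} {m : ℕ}

theorem Polynomial.Monic.X_pow_add_mul_pow (hw : w.Monic) (hdeg : w.natDegree = m) (r i : ℕ) :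
    X ^ (m + r) * w ^ i =
      X ^ r * w ^ (i + 1) - ∑ k ∈ Finset.range m, w.coeff k • (X ^ (r + k) * w ^ i) := by
  have hsum : ∑ k ∈ Finset.range m, w.coeff k • (X ^ (r + k) * w ^ i) =
      X ^ r * w ^ i * ∑ k ∈ Finset.range m, C (w.coeff k) * X ^ k := by
    rw [Finset.mul_sum]
    refine Finset.sum_congr rfl fun k _ => ?_
    rw [smul_eq_C_mul]
    ring
  have hw' := hw.as_sum
  rw [hdeg] at hw'
  rw [hsum]
  linear_combination (-(X ^ r * w ^ i)) * hw'

variable (w) in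
noncomputable def wExpansion : (ℕ × ℕ →₀ R) →ₗ[R] R[X] :=
  linearCombination R fun p => X ^ p.2 * w ^ p.1

def monomialWeight (a b : G) (p : ℕ × ℕ) : WithTop G :=
  ((p.2 • a + p.1 • b : G) : WithTop G)

variable {a b : G}

theorem exists_wExpansion_X_pow_add_mul_pow (hw : w.Monic) (hdeg : w.natDegree = m)
    (hab : m • a < b)
    (hcoeff : ∀ k, 0 < k → k < m → (((m - k) • a : G) : WithTop G) < ν (w.coeff k))
    (hcoeff₀ : ν (w.coeff 0) = ((m • a : G) : WithTop G)) {r i : ℕ} (hr : r < m)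
    (e : ℕ → ℕ × ℕ →₀ R)
    (he : ∀ k < m, e k ∈ supported R R {p : ℕ × ℕ | p.2 < m} ∧
      wExpansion w (e k) = X ^ (r + k) * w ^ i ∧
      gaussVal ν (monomialWeight a b) (e k) = monomialWeight a b (i, r + k)) :
    ∃ c ∈ supported R R {p : ℕ × ℕ | p.2 < m}, wExpansion w c = X ^ (m + r) * w ^ i ∧
      gaussVal ν (monomialWeight a b) c = monomialWeight a b (i, m + r) := by
  have hm : 0 < m := r.zero_le.trans_lt hr
  refine ⟨single (i + 1, r) 1 + ∑ k ∈ Finset.range m, (-w.coeff k) • e k, ?_, ?_, ?_⟩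
  · exact add_mem (single_mem_supported R _ hr)
      (sum_mem fun k hk => Submodule.smul_mem _ _ (he k (Finset.mem_range.1 hk)).1)
  · rw [hw.X_pow_add_mul_pow hdeg, map_add, map_sum, sub_eq_add_neg, ← Finset.sum_neg_distrib]
    simp only [wExpansion, linearCombination_single, one_smul, map_smul]
    congr 1
    refine Finset.sum_congr rfl fun k hk => ?_
    rw [← wExpansion, (he k (Finset.mem_range.1 hk)).2.1, neg_smul]
  -- only the `k = 0` term attains the minimal value; all the others are strictly larger
  rw [← Finset.add_sum_erase _ _ (Finset.mem_range.2 hm), add_left_comm,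
    gaussVal_add_eq_of_lt] <;>
    rw [gaussVal_smul, AddValuation.map_neg, hcoeff₀, (he 0 hm).2.2]
  · simp only [monomialWeight, ← WithTop.coe_add, add_zero, add_nsmul, add_assoc]
  rw [add_zero]
  refine (lt_min ?_ (lt_gaussVal_sum _ _ ?_ fun k hk => ?_)).trans_le (min_le_gaussVal_add _ _)
  · rw [gaussVal_single, AddValuation.map_one, zero_add]
    simp only [monomialWeight, ← WithTop.coe_add, WithTop.coe_lt_coe, succ_nsmul]
    calc m • a + (r • a + i • b) = r • a + i • b + m • a := by abel
      _ < r • a + i • b + b := by gcongr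
      _ = r • a + (i • b + b) := by abel
  · exact WithTop.coe_lt_top _
  obtain ⟨hk₀, hkm⟩ := Finset.mem_erase.1 hk
  rw [Finset.mem_range] at hkm
  rw [gaussVal_smul, AddValuation.map_neg, (he k hkm).2.2]
  calc ((m • a : G) : WithTop G) + monomialWeight a b (i, r)
      = (((m - k) • a : G) : WithTop G) + monomialWeight a b (i, r + k) := by
        simp only [monomialWeight, ← WithTop.coe_add, ← add_assoc, ← add_nsmul]
        congr 3
        omega
    _ < ν (w.coeff k) + monomialWeight a b (i, r + k) :=
        WithTop.add_lt_add_right WithTop.coe_ne_top (hcoeff k (Nat.pos_of_ne_zero hk₀) hkm)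

theorem exists_wExpansion_X_pow_mul_pow (hw : w.Monic) (hdeg : w.natDegree = m)
    (hab : m • a < b)
    (hcoeff : ∀ k, 0 < k → k < m → (((m - k) • a : G) : WithTop G) < ν (w.coeff k))
    (hcoeff₀ : ν (w.coeff 0) = ((m • a : G) : WithTop G)) {j : ℕ} (hj : j < 2 * m) (i : ℕ) :
    ∃ c ∈ supported R R {p : ℕ × ℕ | p.2 < m}, wExpansion w c = X ^ j * w ^ i ∧
      gaussVal ν (monomialWeight a b) c = monomialWeight a b (i, j) := by
  induction j using Nat.strong_induction_on with
  | _ j ih =>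
  by_cases hjm : j < m
  · refine ⟨single (i, j) 1, single_mem_supported R _ hjm, ?_, ?_⟩
    · rw [wExpansion, linearCombination_single, one_smul]
    · rw [gaussVal_single, AddValuation.map_one, zero_add]
  obtain ⟨r, rfl⟩ := Nat.exists_eq_add_of_le (not_lt.1 hjm)
  have he : ∀ k, ∃ e : ℕ × ℕ →₀ R, k < m → e ∈ supported R R {p : ℕ × ℕ | p.2 < m} ∧
      wExpansion w e = X ^ (r + k) * w ^ i ∧
      gaussVal ν (monomialWeight a b) e = monomialWeight a b (i, r + k) := fun k => by
    by_cases hk : k < m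
    · obtain ⟨e, he⟩ := ih (r + k) (by omega) (by omega)
      exact ⟨e, fun _ => he⟩
    · exact ⟨0, fun h => absurd h hk⟩
  choose e he using he
  exact exists_wExpansion_X_pow_add_mul_pow hw hdeg hab hcoeff hcoeff₀ (by omega) e he

end WExpansion

section InftyValuation

variable {K : Type*} [Field K] {m : ℕ} {α : ℤ ×ₗ ℤ}

theorem vBase_zero : vBase K m α 0 = ⊤ := if_pos rfl

theorem vBase_of_ne_zero {a : RatFunc K} (ha : a ≠ 0) :
    vBase K m α a = ((a.intDegree * m) • α : ℤ ×ₗ ℤ) := if_neg ha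

theorem antitone_mul_zsmul (m : ℕ) (hα : α ≤ 0) : Antitone fun d : ℤ => (d * m) • α := by
  intro d₁ d₂ h
  have := zsmul_le_zsmul_left (neg_nonneg.2 hα) (mul_le_mul_of_nonneg_right h m.cast_nonneg)
  rwa [zsmul_neg, zsmul_neg, neg_le_neg_iff] at this

theorem min_vBase_le_vBase_add (hα : α ≤ 0) (a b : RatFunc K) :
    min (vBase K m α a) (vBase K m α b) ≤ vBase K m α (a + b) := by
  by_cases ha : a = 0
  · simp [ha, vBase_zero]
  by_cases hb : b = 0
  · simp [hb, vBase_zero]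
  by_cases hab : a + b = 0
  · simp [hab, vBase_zero]
  rw [vBase_of_ne_zero ha, vBase_of_ne_zero hb, vBase_of_ne_zero hab, ← WithTop.coe_min,
    WithTop.coe_le_coe, ← (antitone_mul_zsmul m hα).map_max]
  exact antitone_mul_zsmul m hα (RatFunc.intDegree_add_le hb hab)

theorem vBase_mul (a b : RatFunc K) : vBase K m α (a * b) = vBase K m α a + vBase K m α b := by
  by_cases ha : a = 0
  · simp [ha, vBase_zero]
  by_cases hb : b = 0
  · simp [hb, vBase_zero]
  rw [vBase_of_ne_zero ha, vBase_of_ne_zero hb, vBase_of_ne_zero (mul_ne_zero ha hb),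
    RatFunc.intDegree_mul ha hb, add_mul, add_zsmul, WithTop.coe_add]

theorem vBase_one : vBase K m α 1 = 0 := by
  rw [vBase_of_ne_zero (one_ne_zero : (1 : RatFunc K) ≠ 0), RatFunc.intDegree_one, zero_mul,
    zero_smul, WithTop.coe_zero]

variable (K m α) in
noncomputable def inftyAddValuation (hα : α ≤ 0) : AddValuation (RatFunc K) (WithTop (ℤ ×ₗ ℤ)) :=
  AddValuation.of (vBase K m α) vBase_zero vBase_one (min_vBase_le_vBase_add hα) vBase_mul

end InftyValuation

section Proposition

variable {K : Type*} [Field K] {m n : ℕ} {α β : ℤ ×ₗ ℤ}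

theorem coe_termWeight {a : RatFunc K} (ha : a ≠ 0) (p : ℕ × ℕ) :
    (termWeight K m n α β p a : WithTop (ℤ ×ₗ ℤ)) = vBase K m α a + monomialWeight (n • α) β p := by
  rw [vBase_of_ne_zero ha, monomialWeight, ← WithTop.coe_add, termWeight, add_assoc,
    natCast_mul_natCast_zsmul, natCast_zsmul]

theorem support_inf_termWeight (hα : α ≤ 0) (c : ℕ × ℕ →₀ RatFunc K) :
    c.support.inf (fun p => (termWeight K m n α β p (c p) : WithTop (ℤ ×ₗ ℤ))) =
      Finsupp.gaussVal (inftyAddValuation K m α hα) (monomialWeight (n • α) β) c :=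
  Finset.inf_congr rfl fun p hp => coe_termWeight (Finsupp.mem_support_iff.1 hp) p

theorem sum_C_mul_X_pow_mul_pow_eq_wExpansion (w : (RatFunc K)[X]) (c : ℕ × ℕ →₀ RatFunc K) :
    c.sum (fun p a => C a * X ^ p.2 * w ^ p.1) = wExpansion w c := by
  rw [wExpansion, Finsupp.linearCombination_apply]
  refine Finsupp.sum_congr fun p _ => ?_
  rw [smul_eq_C_mul, mul_assoc]

end Proposition

theorem stmt12_general (K : Type*) [Field K] (m n : ℕ) (hm : 0 < m)
    (w : Polynomial (RatFunc K)) (hw : w.Monic) (hdeg : w.natDegree = m)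
    (α β : ℤ ×ₗ ℤ) (hαneg : α < 0)
    (v : Polynomial (RatFunc K) → WithTop (ℤ ×ₗ ℤ))
    (hv : ∀ (f : Polynomial (RatFunc K)) (c : (ℕ × ℕ) →₀ RatFunc K),
      (∀ p ∈ c.support, p.2 < m) →
      f = c.sum (fun p a => Polynomial.C a * X ^ p.2 * w ^ p.1) →
      v f = c.support.inf (fun p => ((termWeight K m n α β p (c p) : WithTop (ℤ ×ₗ ℤ)))))
    -- (i) `β > mnα`
    (hi : ((m : ℤ) * n) • α < β)
    -- (ii) `v(w_k) > (m-k)nα` for `1 ≤ k ≤ m-1`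
    (hii : ∀ k : ℕ, 1 ≤ k → k < m →
      ((((m : ℤ) - k) * n) • α : WithTop (ℤ ×ₗ ℤ)) < vBase K m α (w.coeff k))
    -- (iii) `v(w_0) = mnα`
    (hiii : vBase K m α (w.coeff 0) = (((m : ℤ) * n) • α : ℤ ×ₗ ℤ)) :
    ∀ (i j : ℕ), j ≤ 2 * m - 1 →
      v (X ^ j * w ^ i) = (((j : ℤ) * n) • α + (i : ℤ) • β : ℤ ×ₗ ℤ) := by
  intro i j hj
  rw [natCast_mul_natCast_zsmul] at hi hiii
  have hcoeff : ∀ k, 0 < k → k < m →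
      (((m - k) • n • α : ℤ ×ₗ ℤ) : WithTop (ℤ ×ₗ ℤ)) < vBase K m α (w.coeff k) := by
    intro k hk hkm
    simpa only [← WithTop.coe_zsmul, ← Nat.cast_sub hkm.le, natCast_mul_natCast_zsmul] using
      hii k hk hkm
  obtain ⟨c, hc, hcw, hcv⟩ :=
    exists_wExpansion_X_pow_mul_pow (ν := inftyAddValuation K m α hαneg.le) (b := β)
      hw hdeg hi hcoeff hiii (j := j) (by omega) i
  rw [← sum_C_mul_X_pow_mul_pow_eq_wExpansion] at hcw
  rw [hv _ c ((Finsupp.mem_supported _ _).1 hc) hcw.symm, support_inf_termWeight hαneg.le, hcv,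
    monomialWeight, natCast_mul_natCast_zsmul, natCast_zsmul]

/-- Equation (4.13) in Proposition 4.8: under hypotheses (i)-(iii), the identity
`v(y^j w^i) = jnα + iβ` holds for all `i ≥ 0` and `0 ≤ j ≤ 2m-1`. -/
theorem stmt12 (K : Type*) [Field K] (m n : ℕ) (hm : 0 < m) (hn : 0 < n)
    (hmn : Nat.Coprime m n)
    (w : Polynomial (RatFunc K)) (hw : w.Monic) (hdeg : w.natDegree = m)
    (α β : ℤ ×ₗ ℤ) (hαneg : α < 0) (hβ : β ≠ 0)
    (hind : ∀ (k : ℤ) (γ : ℤ ×ₗ ℤ), 2 ≤ k → α ≠ k • γ)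
    (hcom : ∀ a b : ℤ, a ≠ 0 → b ≠ 0 → a • α ≠ b • β)
    (v : Polynomial (RatFunc K) → WithTop (ℤ ×ₗ ℤ))
    (hexp : ∀ f : Polynomial (RatFunc K), ∃ c : (ℕ × ℕ) →₀ RatFunc K,
      (∀ p ∈ c.support, p.2 < m) ∧
      f = c.sum (fun p a => Polynomial.C a * X ^ p.2 * w ^ p.1))
    (hv : ∀ (f : Polynomial (RatFunc K)) (c : (ℕ × ℕ) →₀ RatFunc K),
      (∀ p ∈ c.support, p.2 < m) →
      f = c.sum (fun p a => Polynomial.C a * X ^ p.2 * w ^ p.1) →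
      v f = c.support.inf (fun p => ((termWeight K m n α β p (c p) : WithTop (ℤ ×ₗ ℤ)))))
    -- (i) `β > mnα`
    (hi : ((m : ℤ) * n) • α < β)
    -- (ii) `v(w_k) > (m-k)nα` for `1 ≤ k ≤ m-1`
    (hii : ∀ k : ℕ, 1 ≤ k → k < m →
      ((((m : ℤ) - k) * n) • α : WithTop (ℤ ×ₗ ℤ)) < vBase K m α (w.coeff k))
    -- (iii) `v(w_0) = mnα`
    (hiii : vBase K m α (w.coeff 0) = (((m : ℤ) * n) • α : ℤ ×ₗ ℤ)) :
    ∀ (i j : ℕ), j ≤ 2 * m - 1 →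
      v (X ^ j * w ^ i) = (((j : ℤ) * n) • α + (i : ℤ) • β : ℤ ×ₗ ℤ) :=
  stmt12_general K m n hm w hw hdeg α β hαneg v hv hi hii hiii
end

section
/- Let K be a field and let v : K(x,y) → (ℤ⊕ℤ, lex) ∪ {∞} be the K-valuation associated to (m,n,w,α,β) = (2, 3, y²+x³, (-1,-1), (0,-1)) with ℤ⊕ℤ ordered lexicographically. Then v(K[x,y]*) ⊆ ℤ_{≥0}·(-1,-1) + ℤ_{≥0}·(0,-1), so v(K[x,y]*) is reversely well-ordered, and v does not come from a monomial order in suitable variables since v(K[x,y]*) ≠ ℤ_{≤0} ⊕ ℤ_{≤0}. -/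
/-!
Dividing repeatedly by the monic polynomial `w = y² + x³`, every `f ∈ K[x,y]` has a `w`-expansion
whose coefficients lie in `K[x]`. A polynomial coefficient `g` has `-v_∞(g) = deg g ≥ 0`, so every
term value, and hence `v f`, lies in `ℕα + ℕβ = {(-a, -a-b) | a, b ∈ ℕ}`. These points satisfy
`q ≤ p ≤ 0`: bounded coordinates give every nonempty subset a lexicographic maximum, and the point
`(-1, 0)` of `ℤ_{≤0} ⊕ ℤ_{≤0}` is missed.
-/

open Polynomial

namespace Polynomial

variable {R : Type*} [CommRing R]

noncomputable def expansionSpan (W : R[X]) (m : ℕ) : Submodule R R[X] :=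
  Submodule.span R ((fun p : ℕ × ℕ => X ^ p.2 * W ^ p.1) '' {p | p.2 < m})

theorem mem_expansionSpan_of_natDegree_lt {W F : R[X]} {m : ℕ} (hF : F.natDegree < m) :
    F ∈ expansionSpan W m := by
  rw [F.as_sum_range' m hF]
  refine Submodule.sum_mem _ fun j hj => ?_
  rw [← C_mul_X_pow_eq_monomial, C_mul']
  refine Submodule.smul_mem _ _ (Submodule.subset_span ⟨(0, j), Finset.mem_range.mp hj, ?_⟩)
  simp

theorem mul_mem_expansionSpan {W F : R[X]} {m : ℕ} (hF : F ∈ expansionSpan W m) :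
    W * F ∈ expansionSpan W m := by
  suffices (expansionSpan W m).map (LinearMap.mulLeft R W) ≤ expansionSpan W m from
    this ⟨F, hF, rfl⟩
  refine (Submodule.map_span_le _ _ _).mpr ?_
  rintro _ ⟨p, hp, rfl⟩
  refine Submodule.subset_span ⟨(p.1 + 1, p.2), hp, ?_⟩
  simp only [LinearMap.mulLeft_apply]
  ring

theorem mem_expansionSpan_of_monic {W : R[X]} (hW : W.Monic) (hdeg : 0 < W.natDegree)
    (F : R[X]) : F ∈ expansionSpan W W.natDegree := by
  induction h : F.natDegree using Nat.strong_induction_on generalizing F with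
  | _ d ih =>
    rcases lt_or_ge d W.natDegree with hlt | hge
    · exact mem_expansionSpan_of_natDegree_lt (h ▸ hlt)
    have hW1 : W ≠ 1 := fun h1 => by simp [h1] at hdeg
    rw [← modByMonic_add_div F W]
    refine Submodule.add_mem _ (mem_expansionSpan_of_natDegree_lt
      (natDegree_modByMonic_lt F hW hW1)) (mul_mem_expansionSpan (ih _ ?_ _ rfl))
    rw [natDegree_divByMonic F hW]
    omega

theorem exists_finsupp_sum_eq_of_monic {W : R[X]} (hW : W.Monic) (hdeg : 0 < W.natDegree)
    (F : R[X]) : ∃ c : (ℕ × ℕ) →₀ R, (∀ p ∈ c.support, p.2 < W.natDegree) ∧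
      F = c.sum fun p a => C a * X ^ p.2 * W ^ p.1 := by
  obtain ⟨c, hc, rfl⟩ :=
    (Finsupp.mem_span_image_iff_linearCombination _).mp (mem_expansionSpan_of_monic hW hdeg F)
  refine ⟨c, fun p hp => (Finsupp.mem_supported _ _).mp hc hp, ?_⟩
  rw [Finsupp.linearCombination_apply]
  exact Finsupp.sum_congr fun p _ => by rw [mul_assoc, C_mul']

theorem map_finsupp_sum_C_mul_X_pow_mul_pow {S : Type*} [CommRing S] (φ : R →+* S)
    (W : R[X]) (c : (ℕ × ℕ) →₀ R) :
    (c.sum fun p a => C a * X ^ p.2 * W ^ p.1).map φ =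
      (c.mapRange φ φ.map_zero).sum fun p a => C a * X ^ p.2 * (W.map φ) ^ p.1 := by
  rw [Finsupp.sum_mapRange_index (fun p => by simp), Finsupp.sum, Finsupp.sum, Polynomial.map_sum]
  simp only [Polynomial.map_mul, Polynomial.map_pow, map_C, map_X]

end Polynomial

theorem termWeight_algebraMap (K : Type*) [Field K] (m n : ℕ) (α β : ℤ ×ₗ ℤ) (p : ℕ × ℕ)
    (g : K[X]) :
    termWeight K m n α β p (algebraMap K[X] (RatFunc K) g) =
      ((m * g.natDegree + n * p.2 : ℕ) : ℤ) • α + (p.1 : ℤ) • β := by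
  rw [termWeight, RatFunc.intDegree_polynomial]
  push_cast
  module

theorem polyCoeffs_iff_mem_lifts (K : Type*) [Field K] (f : (RatFunc K)[X]) :
    polyCoeffs K f ↔ f ∈ lifts (algebraMap K[X] (RatFunc K)) := by
  rw [lifts_iff_coeff_lifts]
  exact forall_congr' fun i => exists_congr fun p => eq_comm

theorem exists_valuation_eq_nat_smul_add_nat_smul (K : Type*) [Field K] {m n : ℕ} {α β : ℤ ×ₗ ℤ}
    {W : K[X][X]} (hW : W.Monic) (hWm : W.natDegree = m) (hm : 0 < m)
    {w : (RatFunc K)[X]} (hw : W.map (algebraMap K[X] (RatFunc K)) = w)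
    {v : (RatFunc K)[X] → WithTop (ℤ ×ₗ ℤ)}
    (hv : ∀ (f : Polynomial (RatFunc K)) (c : (ℕ × ℕ) →₀ RatFunc K),
      (∀ p ∈ c.support, p.2 < m) →
      f = c.sum (fun p a => Polynomial.C a * X ^ p.2 * w ^ p.1) →
      v f = c.support.inf (fun p => ((termWeight K m n α β p (c p) : WithTop (ℤ ×ₗ ℤ)))))
    (f : (RatFunc K)[X]) (hf : polyCoeffs K f) (hf0 : f ≠ 0) :
    ∃ a b : ℕ, v f = ((a : ℤ) • α + (b : ℤ) • β : ℤ ×ₗ ℤ) := by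
  set A := algebraMap K[X] (RatFunc K)
  obtain ⟨F, rfl⟩ := (mem_lifts f).mp ((polyCoeffs_iff_mem_lifts K f).mp hf)
  obtain ⟨c, hc, hF⟩ := exists_finsupp_sum_eq_of_monic hW (hWm ▸ hm) F
  set c' := c.mapRange A A.map_zero
  have hc' : ∀ p ∈ c'.support, p.2 < m := fun p hp => hWm ▸ hc p (Finsupp.support_mapRange hp)
  have hmap : F.map A = c'.sum fun p a => C a * X ^ p.2 * w ^ p.1 :=
    hF ▸ hw ▸ map_finsupp_sum_C_mul_X_pow_mul_pow A W c
  have hne : c'.support.Nonempty :=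
    Finsupp.support_nonempty_iff.mpr fun h0 => hf0 (by rw [hmap, h0, Finsupp.sum_zero_index])
  obtain ⟨p, -, hp⟩ := Finset.exists_mem_eq_inf c'.support hne
    fun p => ((termWeight K m n α β p (c' p) : WithTop (ℤ ×ₗ ℤ)))
  refine ⟨m * (c p).natDegree + n * p.2, p.1, ?_⟩
  rw [hv _ c' hc' hmap, hp, Finsupp.mapRange_apply, termWeight_algebraMap]

theorem toLex_smul_add_smul (a b : ℤ) :
    a • toLex ((-1 : ℤ), (-1 : ℤ)) + b • toLex ((0 : ℤ), (-1 : ℤ)) = toLex (-a, -a - b) := by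
  change (a • ((-1 : ℤ), (-1 : ℤ)) + b • ((0 : ℤ), (-1 : ℤ)) : ℤ × ℤ) = (-a, -a - b)
  ext <;> simp; ring

theorem Int.exists_greatest_lex_of_bdd {S : Set (ℤ ×ₗ ℤ)} {B₁ B₂ : ℤ}
    (h₁ : ∀ γ ∈ S, (ofLex γ).1 ≤ B₁) (h₂ : ∀ γ ∈ S, (ofLex γ).2 ≤ B₂) (hS : S.Nonempty) :
    ∃ mx ∈ S, ∀ s ∈ S, s ≤ mx := by
  obtain ⟨γ₀, hγ₀⟩ := hS
  obtain ⟨a, ⟨γ₁, hγ₁, rfl⟩, ha⟩ := Int.exists_greatest_of_bdd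
    (P := fun z => ∃ γ ∈ S, (ofLex γ).1 = z)
    ⟨B₁, fun _ ⟨γ, hγ, he⟩ => he ▸ h₁ γ hγ⟩ ⟨_, γ₀, hγ₀, rfl⟩
  obtain ⟨b, ⟨γ₂, hγ₂, h₂₁, rfl⟩, hb⟩ := Int.exists_greatest_of_bdd
    (P := fun z => ∃ γ ∈ S, (ofLex γ).1 = (ofLex γ₁).1 ∧ (ofLex γ).2 = z)
    ⟨B₂, fun _ ⟨γ, hγ, _, he⟩ => he ▸ h₂ γ hγ⟩ ⟨_, γ₁, hγ₁, rfl, rfl⟩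
  refine ⟨γ₂, hγ₂, fun s hs => Prod.Lex.le_iff.mpr ?_⟩
  rcases (ha _ ⟨s, hs, rfl⟩).lt_or_eq with hlt | heq
  · exact .inl (h₂₁ ▸ hlt)
  · exact .inr ⟨heq.trans h₂₁.symm, hb _ ⟨s, hs, heq, rfl⟩⟩

theorem stmt14_general (K : Type*) [Field K] (m n : ℕ) (hm : m = 2)
    (w : Polynomial (RatFunc K)) (hwdef : w = X ^ 2 + Polynomial.C (RatFunc.X ^ 3))
    (α β : ℤ ×ₗ ℤ) (hα : α = toLex (-1, -1)) (hβ : β = toLex (0, -1))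
    (v : Polynomial (RatFunc K) → WithTop (ℤ ×ₗ ℤ))
    (hv : ∀ (f : Polynomial (RatFunc K)) (c : (ℕ × ℕ) →₀ RatFunc K),
      (∀ p ∈ c.support, p.2 < m) →
      f = c.sum (fun p a => Polynomial.C a * X ^ p.2 * w ^ p.1) →
      v f = c.support.inf (fun p => ((termWeight K m n α β p (c p) : WithTop (ℤ ×ₗ ℤ))))) :
    -- `v(K[x,y]*) ⊆ ℤ_{≥0}·α + ℤ_{≥0}·β`
    (∀ f : Polynomial (RatFunc K), polyCoeffs K f → f ≠ 0 →
      ∃ a b : ℕ, v f = ((a : ℤ) • α + (b : ℤ) • β : ℤ ×ₗ ℤ)) ∧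
    -- `v(K[x,y]*)` is reversely well-ordered
    (∀ S : Set (ℤ ×ₗ ℤ),
      S ⊆ {γ : ℤ ×ₗ ℤ | ∃ f : Polynomial (RatFunc K),
        polyCoeffs K f ∧ f ≠ 0 ∧ v f = (γ : WithTop (ℤ ×ₗ ℤ))} →
      S.Nonempty → ∃ mx ∈ S, ∀ s ∈ S, s ≤ mx) ∧
    -- `v(K[x,y]*) ≠ ℤ_{≤0} ⊕ ℤ_{≤0}` (so `v` does not come from a monomial order
    -- in suitable variables)
    {γ : ℤ ×ₗ ℤ | ∃ f : Polynomial (RatFunc K),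
        polyCoeffs K f ∧ f ≠ 0 ∧ v f = (γ : WithTop (ℤ ×ₗ ℤ))} ≠
      {γ : ℤ ×ₗ ℤ | (ofLex γ).1 ≤ 0 ∧ (ofLex γ).2 ≤ 0} := by
  set W : K[X][X] := X ^ 2 + C (Polynomial.X ^ 3)
  have hWm : W.natDegree = m := hm ▸ natDegree_X_pow_add_C
  have hw : W.map (algebraMap K[X] (RatFunc K)) = w := by simp [W, hwdef]
  have hvalues := exists_valuation_eq_nat_smul_add_nat_smul K
    (monic_X_pow_add_C _ two_ne_zero) hWm (by omega) hw hv
  set Γ := {γ : ℤ ×ₗ ℤ | ∃ f : Polynomial (RatFunc K),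
    polyCoeffs K f ∧ f ≠ 0 ∧ v f = (γ : WithTop (ℤ ×ₗ ℤ))}
  have hshape : ∀ γ ∈ Γ, (ofLex γ).2 ≤ (ofLex γ).1 ∧ (ofLex γ).1 ≤ 0 := by
    rintro γ ⟨f, hf, hf0, hvf⟩
    obtain ⟨a, b, hab⟩ := hvalues f hf hf0
    obtain rfl : γ = _ := WithTop.coe_injective (hvf.symm.trans hab)
    rw [hα, hβ, toLex_smul_add_smul]
    constructor <;> simp
  refine ⟨hvalues, fun S hS hne => ?_, fun heq => ?_⟩
  · exact Int.exists_greatest_lex_of_bdd (fun γ hγ => (hshape γ (hS hγ)).2)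
      (fun γ hγ => (hshape γ (hS hγ)).1.trans (hshape γ (hS hγ)).2) hne
  · have hmem : toLex ((-1 : ℤ), (0 : ℤ)) ∈ {γ : ℤ ×ₗ ℤ | (ofLex γ).1 ≤ 0 ∧ (ofLex γ).2 ≤ 0} := by
      simp
    have hbad := (hshape _ (heq ▸ hmem)).1
    simp at hbad

/-- Example 5.2: for the `K`-valuation `v` associated to
`(m,n,w,α,β) = (2, 3, y²+x³, (-1,-1), (0,-1))` (lexicographic order on `ℤ⊕ℤ`),
the image `v(K[x,y]*)` is contained in `ℤ_{≥0}·α + ℤ_{≥0}·β`, hence is reversely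
well-ordered; and `v(K[x,y]*) ≠ ℤ_{≤0} ⊕ ℤ_{≤0}`, so `v` does not come from a
monomial order in suitable variables. -/
theorem stmt14 (K : Type*) [Field K] (m n : ℕ) (hm : m = 2) (hn : n = 3)
    (w : Polynomial (RatFunc K)) (hwdef : w = X ^ 2 + Polynomial.C (RatFunc.X ^ 3))
    (α β : ℤ ×ₗ ℤ) (hα : α = toLex (-1, -1)) (hβ : β = toLex (0, -1))
    (v : Polynomial (RatFunc K) → WithTop (ℤ ×ₗ ℤ))
    (hexp : ∀ f : Polynomial (RatFunc K), ∃ c : (ℕ × ℕ) →₀ RatFunc K,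
      (∀ p ∈ c.support, p.2 < m) ∧
      f = c.sum (fun p a => Polynomial.C a * X ^ p.2 * w ^ p.1))
    (hv : ∀ (f : Polynomial (RatFunc K)) (c : (ℕ × ℕ) →₀ RatFunc K),
      (∀ p ∈ c.support, p.2 < m) →
      f = c.sum (fun p a => Polynomial.C a * X ^ p.2 * w ^ p.1) →
      v f = c.support.inf (fun p => ((termWeight K m n α β p (c p) : WithTop (ℤ ×ₗ ℤ))))) :
    -- `v(K[x,y]*) ⊆ ℤ_{≥0}·α + ℤ_{≥0}·β`
    (∀ f : Polynomial (RatFunc K), polyCoeffs K f → f ≠ 0 →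
      ∃ a b : ℕ, v f = ((a : ℤ) • α + (b : ℤ) • β : ℤ ×ₗ ℤ)) ∧
    -- `v(K[x,y]*)` is reversely well-ordered
    (∀ S : Set (ℤ ×ₗ ℤ),
      S ⊆ {γ : ℤ ×ₗ ℤ | ∃ f : Polynomial (RatFunc K),
        polyCoeffs K f ∧ f ≠ 0 ∧ v f = (γ : WithTop (ℤ ×ₗ ℤ))} →
      S.Nonempty → ∃ mx ∈ S, ∀ s ∈ S, s ≤ mx) ∧
    -- `v(K[x,y]*) ≠ ℤ_{≤0} ⊕ ℤ_{≤0}` (so `v` does not come from a monomial order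
    -- in suitable variables)
    {γ : ℤ ×ₗ ℤ | ∃ f : Polynomial (RatFunc K),
        polyCoeffs K f ∧ f ≠ 0 ∧ v f = (γ : WithTop (ℤ ×ₗ ℤ))} ≠
      {γ : ℤ ×ₗ ℤ | (ofLex γ).1 ≤ 0 ∧ (ofLex γ).2 ≤ 0} :=
  stmt14_general K m n hm w hwdef α β hα hβ v hv
end
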